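/- arXiv:1808.03253 — 5 statements merged into one kernel-verified Lean document; each statement's English description precedes it below -/
import Mathlib

section
/- Let G be a directed acyclic graph, Z a conditioning set, and v ∈ Z. If a path p between two vertices is active with respect to Z \ {v} but not active with respect to Z, then v lies on p as a non-collider. In particular, removing a variable from a conditioning set cannot activate a path by opening a collider: every path newly activated by the removal contains the removed vertex as a non-collider on the path. -/
/-! Basic definitions for paths, colliders, activation (d-connection), and
(un)stability in a directed graph, following the paper's conventions.

* A directed graph on vertex type `V` is an edge relation `E : V → V → Prop`.
* A path is a list of distinct vertices consecutively joined by edges of the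
  graph traversed in either direction.
* A vertex `w` is a collider on a path if both path edges at `w` point into `w`.
* Given a conditioning set `Z`, a path is active w.r.t. `Z` if every collider on
  the path is in `Z` or has a descendant in `Z`, and every interior non-collider
  on the path is not in `Z`.
* A path is unstable (w.r.t. an optional selection vertex `S` and a set `U` of
  unobserved vertices) if it contains `S` or a vertex of `U`. -/

variable {V : Type*}

/-- A path: a list of distinct vertices, consecutive ones joined by an edge of
the graph traversed in either direction. -/
def IsUndirPath (E : V → V → Prop) (p : List V) : Prop :=
  p.Nodup ∧ p.Chain' (fun a b => E a b ∨ E b a)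

/-- `p` is a path between `a` and `b`. -/
def PathBetween (E : V → V → Prop) (a b : V) (p : List V) : Prop :=
  IsUndirPath E p ∧ p.head? = some a ∧ p.getLast? = some b

/-- `w` is a collider on the path `p`: both path edges at `w` point into `w`. -/
def IsColliderOn (E : V → V → Prop) (p : List V) (w : V) : Prop :=
  ∃ a b, [a, w, b] <:+: p ∧ E a w ∧ E b w

/-- A path `p` is active with respect to the conditioning set `Z`: every
collider on `p` is in `Z` or has a descendant in `Z`, and every (interior)
non-collider on `p` is not in `Z`. -/
def ActivePath (E : V → V → Prop) (Z : Set V) (p : List V) : Prop :=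
  (∀ w, IsColliderOn E p w → w ∈ Z ∨ ∃ d ∈ Z, Relation.TransGen E w d) ∧
  (∀ w ∈ p.tail.dropLast, ¬ IsColliderOn E p w → w ∉ Z)

/-- A path is unstable if it contains the selection vertex `S` or an unobserved
vertex of `U`. -/
def UnstablePath (S : Option V) (U : Set V) (p : List V) : Prop :=
  ∃ w ∈ p, w ∈ U ∨ S = some w

/-- The edge relation is acyclic (the graph is a DAG). -/
def AcyclicRel (E : V → V → Prop) : Prop :=
  ∀ v, ¬ Relation.TransGen E v v

/-- A conditioning set `Z` is stable: no member of `Z` has an active unstable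
path to the target `T` with respect to `Z`. -/
def StableSet (E : V → V → Prop) (S : Option V) (U : Set V) (T : V) (Z : Set V) : Prop :=
  ∀ x ∈ Z, ∀ p : List V, PathBetween E T x p → ActivePath E Z p → ¬ UnstablePath S U p

/-- Let `G` be a DAG, `Z` a conditioning set, and `v ∈ Z`.
If a path `p` between two vertices `a` and `b` is active with respect to
`Z \ {v}` but not active with respect to `Z`, then `v` lies on `p` as a
non-collider.  In particular, removing a variable from a conditioning set
cannot activate a path by opening a collider: every path newly activated by the
removal contains the removed vertex as a non-collider on the path. -/
theorem removal_activates_only_through_noncollider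
    {E : V → V → Prop} (hdag : AcyclicRel E) {Z : Set V} {v : V} (hv : v ∈ Z)
    {a b : V} {p : List V} (hp : PathBetween E a b p)
    (hact : ActivePath E (Z \ {v}) p) (hnact : ¬ ActivePath E Z p) :
    v ∈ p ∧ ¬ IsColliderOn E p v := by
  unfold ActivePath at hact hnact
  push_neg at hnact
  rcases hact with ⟨hcol, hnc⟩
  have hcolZ : ∀ w, IsColliderOn E p w → w ∈ Z ∨ ∃ d ∈ Z, Relation.TransGen E w d := by
    intro w hw
    rcases hcol w hw with h | ⟨d, hd, hdd⟩
    · exact Or.inl h.1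
    · exact Or.inr ⟨d, hd.1, hdd⟩
  rcases hnact hcolZ with ⟨w, hwmem, hwnc, hwZ⟩
  have := hnc w hwmem hwnc
  have hwv : w = v := by
    by_contra h
    exact this ⟨hwZ, h⟩
  subst hwv
  exact ⟨List.mem_of_mem_tail (List.mem_of_mem_dropLast hwmem), hwnc⟩
end

section
/- Let G be a directed acyclic graph, Z a conditioning set, and w ∉ Z. If a path p between two vertices is active with respect to Z ∪ {w} but not active with respect to Z, then w is a collider on p or w is a descendant in G of some collider on p. That is, the only way adding a vertex to a conditioning set can activate a path is by opening a collider on that path. -/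
/-! Basic definitions for paths, colliders, activation (d-connection), and
(un)stability in a directed graph, following the paper's conventions.

* A directed graph on vertex type `V` is an edge relation `E : V → V → Prop`.
* A path is a list of distinct vertices consecutively joined by edges of the
  graph traversed in either direction.
* A vertex `w` is a collider on a path if both path edges at `w` point into `w`.
* Given a conditioning set `Z`, a path is active w.r.t. `Z` if every collider on
  the path is in `Z` or has a descendant in `Z`, and every interior non-collider
  on the path is not in `Z`.
* A path is unstable (w.r.t. an optional selection vertex `S` and a set `U` of
  unobserved vertices) if it contains `S` or a vertex of `U`. -/

variable {V : Type*}

/-- Let `G` be a DAG, `Z` a conditioning set, and `w ∉ Z`.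
If a path `p` between two vertices `a` and `b` is active with respect to
`Z ∪ {w}` but not active with respect to `Z`, then `w` is a collider on `p` or
`w` is a descendant in `G` of some collider on `p`.  That is, the only way
adding a vertex to a conditioning set can activate a path is by opening a
collider on that path. -/
theorem addition_activates_only_by_opening_collider
    {E : V → V → Prop} (hdag : AcyclicRel E) {Z : Set V} {w : V} (hw : w ∉ Z)
    {a b : V} {p : List V} (hp : PathBetween E a b p)
    (hact : ActivePath E (Z ∪ {w}) p) (hnact : ¬ ActivePath E Z p) :
    IsColliderOn E p w ∨ ∃ c, IsColliderOn E p c ∧ Relation.TransGen E c w := by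
  obtain ⟨hcol, hnc⟩ := hact
  -- the non-collider condition for Z holds since Z ⊆ Z ∪ {w}
  have hnc' : ∀ v ∈ p.tail.dropLast, ¬ IsColliderOn E p v → v ∉ Z := fun v hv h hvZ =>
    hnc v hv h (Or.inl hvZ)
  -- so some collider must fail for Z
  rw [ActivePath, not_and_or] at hnact
  rcases hnact with hnact | hnact
  · push_neg at hnact
    obtain ⟨c, hc, hcZ, hdes⟩ := hnact
    rcases hcol c hc with hcZw | ⟨d, hdZw, htg⟩
    · rcases hcZw with h | h
      · exact absurd h hcZ
      · rcases h with rfl; exact Or.inl hc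
    · rcases hdZw with h | h
      · exact absurd htg (hdes d h)
      · rcases h with rfl; exact Or.inr ⟨c, hc, htg⟩
  · push_neg at hnact
    obtain ⟨v, hv, h, hvZ⟩ := hnact
    exact absurd hvZ (hnc' v hv h)
end

section
/- Let G be a directed acyclic graph, Z a conditioning set, and w ∉ Z. Suppose a path p between vertices a and b is active with respect to Z ∪ {w} but not with respect to Z, so that w opens a collider c on p (w = c or w is a descendant of c). Then each of the two segments of p from c to its endpoints a and b is, together with the directed path from c down to w, reachable from w by a path that is active with respect to Z ∪ {w}; in particular, there are active paths with respect to Z ∪ {w} from w to a and from w to b. -/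
/-! Basic definitions for paths, colliders, activation (d-connection), and
(un)stability in a directed graph, following the paper's conventions.

* A directed graph on vertex type `V` is an edge relation `E : V → V → Prop`.
* A path is a list of distinct vertices consecutively joined by edges of the
  graph traversed in either direction.
* A vertex `w` is a collider on a path if both path edges at `w` point into `w`.
* Given a conditioning set `Z`, a path is active w.r.t. `Z` if every collider on
  the path is in `Z` or has a descendant in `Z`, and every interior non-collider
  on the path is not in `Z`.
* A path is unstable (w.r.t. an optional selection vertex `S` and a set `U` of
  unobserved vertices) if it contains `S` or a vertex of `U`. -/

variable {V : Type*}

/-!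
Since `p` is active for `Z ∪ {w}` but not for `Z`, some collider `c` of `p` is closed for `Z`
but opened by `w`: neither `c` nor any descendant of `c` lies in `Z`, and `w` is `c` or one of
its descendants. Start from the segment of `p` between `c` and an endpoint and walk down a
directed path from `c` to `w`, prepending one vertex at a time. The old head then has an edge
pointing out of it, so it becomes a non-collider, and it is outside `Z ∪ {w}` (a descendant of
`c`, and an ancestor of `w` in a DAG). If the new vertex already lies on the path, cut the path
there instead.
-/

open List Relation

section DConnection

variable {E : V → V → Prop} {W : Set V}

theorem IsColliderOn.mem {l : List V} {v : V} (h : IsColliderOn E l v) : v ∈ l :=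
  let ⟨_, _, hinf, _, _⟩ := h
  hinf.subset (by simp)

theorem IsColliderOn.mono {l l' : List V} {v : V} (h : IsColliderOn E l v) (hl : l <:+: l') :
    IsColliderOn E l' v :=
  let ⟨x, y, hinf, hx, hy⟩ := h
  ⟨x, y, hinf.trans hl, hx, hy⟩

theorem IsColliderOn.reverse {l : List V} {v : V} (h : IsColliderOn E l v) :
    IsColliderOn E l.reverse v :=
  let ⟨x, y, hinf, hx, hy⟩ := h
  ⟨y, x, by simpa using hinf.reverse, hy, hx⟩

theorem ActivePath.reverse {l : List V} (h : ActivePath E W l) : ActivePath E W l.reverse := by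
  refine ⟨fun v hv => h.1 v (by simpa using hv.reverse), fun v hv hnc => h.2 v ?_ ?_⟩
  · rwa [tail_reverse, dropLast_reverse, mem_reverse, tail_dropLast] at hv
  · exact fun hc => hnc hc.reverse

theorem PathBetween.reverse {a b : V} {l : List V} (h : PathBetween E a b l) :
    PathBetween E b a l.reverse := by
  obtain ⟨⟨hnd, hch⟩, hhead, hlast⟩ := h
  refine ⟨⟨nodup_reverse.2 hnd, ?_⟩, by rwa [head?_reverse], by rwa [getLast?_reverse]⟩
  exact isChain_reverse.2 (hch.imp fun _ _ => Or.symm)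

theorem PathBetween.suffix {a b u : V} {l l' : List V} (h : PathBetween E a b l)
    (hs : u :: l' <:+ l) : PathBetween E u b (u :: l') := by
  obtain ⟨⟨hnd, hch⟩, -, hlast⟩ := h
  refine ⟨⟨hnd.sublist hs.sublist, hch.suffix hs⟩, rfl, ?_⟩
  obtain ⟨t, rfl⟩ := hs
  simpa using hlast

theorem ActivePath.of_cons {z : V} {l : List V} (hnd : (z :: l).Nodup)
    (h : ActivePath E W (z :: l)) : ActivePath E W l := by
  refine ⟨fun v hv => h.1 v (hv.mono (suffix_cons z l).isInfix), fun v hv hnc => h.2 v ?_ ?_⟩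
  · rw [← tail_dropLast] at hv
    exact mem_of_mem_tail hv
  · rintro ⟨x, y, hinf, hx, hy⟩
    rcases infix_cons_iff.1 hinf with hpre | hinf
    · -- `v` would be the head of `l`, but it is an interior vertex of `l`
      obtain ⟨-, t, rfl⟩ := cons_prefix_cons.1 hpre
      have hvt : v ∈ y :: t := dropLast_subset _ (by simpa using hv)
      exact (nodup_cons.1 (nodup_cons.1 hnd).2).1 (by simpa using hvt)
    · exact hnc ⟨x, y, hinf, hx, hy⟩

theorem ActivePath.suffix {l l' : List V} (hnd : l.Nodup) (h : ActivePath E W l)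
    (hs : l' <:+ l) : ActivePath E W l' := by
  induction l with
  | nil => rwa [suffix_nil.1 hs]
  | cons z l ih =>
    rcases suffix_cons_iff.1 hs with rfl | hs
    · exact h
    · exact ih hnd.of_cons (h.of_cons hnd) hs

theorem ActivePath.cons {u u' : V} {l : List V} (h : ActivePath E W (u' :: l))
    (hu' : u' ∉ W) (hnE : ¬ E u u') : ActivePath E W (u :: u' :: l) := by
  refine ⟨fun v ⟨x, y, hinf, hx, hy⟩ => ?_, fun v hv hnc => ?_⟩
  · rcases infix_cons_iff.1 hinf with hpre | hinf
    · obtain ⟨rfl, rfl, -⟩ : x = u ∧ v = u' ∧ _ := by simpa using hpre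
      exact absurd hx hnE
    · exact h.1 v ⟨x, y, hinf, hx, hy⟩
  · rcases eq_or_ne v u' with rfl | hvu'
    · exact hu'
    refine h.2 v ?_ fun hc => hnc (hc.mono (suffix_cons u _).isInfix)
    cases l with
    | nil => simp at hv
    | cons => simpa [hvu'] using hv

theorem exists_activePath_of_edge (hdag : AcyclicRel E) {u' u a : V} {q : List V}
    (hq : PathBetween E u' a q) (hact : ActivePath E W q) (hu' : u' ∉ W) (hE : E u' u) :
    ∃ q', PathBetween E u a q' ∧ ActivePath E W q' := by
  by_cases hu : u ∈ q
  · obtain ⟨s, t, hst⟩ := append_of_mem hu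
    have hs : u :: t <:+ q := ⟨s, hst.symm⟩
    exact ⟨u :: t, hq.suffix hs, hact.suffix hq.1.1 hs⟩
  obtain ⟨⟨hnd, hch⟩, hhead, hlast⟩ := hq
  obtain _ | ⟨z, q⟩ := q
  · simp at hhead
  obtain rfl : u' = z := by simpa using hhead.symm
  refine ⟨u :: u' :: q, ⟨⟨nodup_cons.2 ⟨hu, hnd⟩, isChain_cons_cons.2 ⟨Or.inr hE, hch⟩⟩, rfl,
    by simpa using hlast⟩, hact.cons hu' fun hE' => hdag u ((TransGen.single hE').tail hE)⟩

theorem exists_activePath_of_reflTransGen (hdag : AcyclicRel E) {Z : Set V} {s w a : V}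
    {l : List V} (hs : ∀ v, ReflTransGen E s v → v ∉ Z) (hl : PathBetween E s a l)
    (hact : ActivePath E (Z ∪ {w}) l) {u : V} (hsu : ReflTransGen E s u)
    (huw : ReflTransGen E u w) : ∃ q, PathBetween E u a q ∧ ActivePath E (Z ∪ {w}) q := by
  induction hsu with
  | refl => exact ⟨l, hl, hact⟩
  | @tail u' u hsu' hE ih =>
    obtain ⟨q, hq, hqact⟩ := ih (huw.head hE)
    have hu'w : u' ≠ w := by
      rintro rfl
      exact hdag u' (TransGen.head' hE huw)
    exact exists_activePath_of_edge hdag hq hqact (by simp [hs u' hsu', hu'w]) hE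

theorem exists_collider_opened {Z : Set V} {w : V} {p : List V}
    (hact : ActivePath E (Z ∪ {w}) p) (hnact : ¬ ActivePath E Z p) :
    ∃ c, IsColliderOn E p c ∧ (∀ v, ReflTransGen E c v → v ∉ Z) ∧ ReflTransGen E c w := by
  by_contra! hno
  refine hnact ⟨fun c hc => ?_, fun v hv hnc hvZ => hact.2 v hv hnc (Or.inl hvZ)⟩
  by_contra! hclosed
  have hcZ : ∀ v, ReflTransGen E c v → v ∉ Z := fun v hv hvZ =>
    (reflTransGen_iff_eq_or_transGen.1 hv).elim (fun h => hclosed.1 (h ▸ hvZ))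
      (hclosed.2 v hvZ)
  apply hno c hc hcZ
  rcases hact.1 c hc with (hcZ' | rfl) | ⟨d, hdZ | rfl, hcd⟩
  · exact absurd hcZ' hclosed.1
  · exact .refl
  · exact absurd hcd (hclosed.2 d hdZ)
  · exact hcd.to_reflTransGen

theorem exists_activePath_of_not_activePath (hdag : AcyclicRel E) {Z : Set V} {w a b : V}
    {p : List V} (hp : PathBetween E a b p) (hact : ActivePath E (Z ∪ {w}) p)
    (hnact : ¬ ActivePath E Z p) : ∃ q, PathBetween E w b q ∧ ActivePath E (Z ∪ {w}) q := by
  obtain ⟨c, hc, hcZ, hcw⟩ := exists_collider_opened hact hnact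
  obtain ⟨s, t, hst⟩ := append_of_mem hc.mem
  have hsuf : c :: t <:+ p := ⟨s, hst.symm⟩
  exact exists_activePath_of_reflTransGen hdag hcZ (hp.suffix hsuf) (hact.suffix hp.1.1 hsuf)
    hcw .refl

end DConnection

theorem opened_collider_branches_reachable_general
    {E : V → V → Prop} (hdag : AcyclicRel E)
    {Z : Set V} {w a b : V}
    {p : List V} (hp : PathBetween E a b p)
    (hact : ActivePath E (Z ∪ {w}) p) (hnact : ¬ ActivePath E Z p) :
    (∃ q : List V, PathBetween E w a q ∧ ActivePath E (Z ∪ {w}) q) ∧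
    (∃ q : List V, PathBetween E w b q ∧ ActivePath E (Z ∪ {w}) q) :=
  ⟨exists_activePath_of_not_activePath hdag hp.reverse hact.reverse
      fun h => hnact (by simpa using h.reverse),
    exists_activePath_of_not_activePath hdag hp hact hnact⟩

/-- Let `G` be a DAG, `Z` a conditioning set, and `w ∉ Z`.
Suppose a path `p` between vertices `a` and `b` is active with respect to
`Z ∪ {w}` but not with respect to `Z`, so that `w` opens a collider `c` on `p`
(`w = c` or `w` is a descendant of `c`).  Then each of the two segments of `p`
from `c` to its endpoints `a` and `b`, together with the directed path from `c`
down to `w`, makes the endpoint reachable from `w` by a path that is active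
with respect to `Z ∪ {w}`; in particular, there are active paths with respect
to `Z ∪ {w}` from `w` to `a` and from `w` to `b`. -/
theorem opened_collider_branches_reachable
    {E : V → V → Prop} (hdag : AcyclicRel E)
    {Z : Set V} {w a b : V} (hw : w ∉ Z)
    {p : List V} (hp : PathBetween E a b p)
    (hact : ActivePath E (Z ∪ {w}) p) (hnact : ¬ ActivePath E Z p)
    {c : V} (hc : IsColliderOn E p c) (hcw : c = w ∨ Relation.TransGen E c w) :
    (∃ q : List V, PathBetween E w a q ∧ ActivePath E (Z ∪ {w}) q) ∧
    (∃ q : List V, PathBetween E w b q ∧ ActivePath E (Z ∪ {w}) q) :=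
  opened_collider_branches_reachable_general hdag hp hact hnact
end

section
/- In the linear Gaussian structural equation model D = ε_D, T = w₁D + ε_T, C = w₂D + ε_C, Y = w₃T + w₄C + ε_Y with ε_D, ε_T, ε_C, ε_Y independent centered Gaussians, the counterfactual variable Y(C=∅) = Y − w₄C is conditionally independent of the pair (D, C) given T. In particular, the conditional law of Y − w₄C given T does not depend on D, C, or the weight w₂. -/
open MeasureTheory ProbabilityTheory
open scoped NNReal

variable {Ω : Type*}

/-- `D = ε_D` in the linear Gaussian SEM (noise variables `ε 0, ε 1, ε 2, ε 3`
play the roles of `ε_D, ε_T, ε_C, ε_Y`). -/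
def semD (ε : Fin 4 → Ω → ℝ) : Ω → ℝ := ε 0

/-- `T = w₁ D + ε_T`. -/
def semT (w₁ : ℝ) (ε : Fin 4 → Ω → ℝ) : Ω → ℝ :=
  fun ω => w₁ * semD ε ω + ε 1 ω

/-- `C = w₂ D + ε_C`. -/
def semC (w₂ : ℝ) (ε : Fin 4 → Ω → ℝ) : Ω → ℝ :=
  fun ω => w₂ * semD ε ω + ε 2 ω

/-- `Y = w₃ T + w₄ C + ε_Y`. -/
def semY (w₁ w₂ w₃ w₄ : ℝ) (ε : Fin 4 → Ω → ℝ) : Ω → ℝ :=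
  fun ω => w₃ * semT w₁ ε ω + w₄ * semC w₂ ε ω + ε 3 ω

/-- The intermediate counterfactual `Y(C=∅) = w₃ T + ε_Y` of the node-split
system. -/
def semYcf (w₁ w₃ : ℝ) (ε : Fin 4 → Ω → ℝ) : Ω → ℝ :=
  fun ω => w₃ * semT w₁ ε ω + ε 3 ω

/-- The exogenous noises `ε_D, ε_T, ε_C, ε_Y` are independent centered Gaussian
random variables with variances `σ2 0, σ2 1, σ2 2, σ2 3`. -/
def IndepGaussianNoise [MeasurableSpace Ω] (μ : Measure Ω) (σ2 : Fin 4 → ℝ≥0)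
    (ε : Fin 4 → Ω → ℝ) : Prop :=
  (∀ i, Measurable (ε i)) ∧
  iIndepFun ε μ ∧
  (∀ i, μ.map (ε i) = gaussianReal 0 (σ2 i))

/-! `Y − w₄C = w₃T + ε_Y` is a function of `T` and `ε_Y`, while `T`, `D` and `C` are functions of
`X = (ε_D, ε_T, ε_C)`, which is independent of `ε_Y`. So it suffices to show that if `H` is
independent of `G` and `m ≤ G`, then `m ⊔ H` and `G` are conditionally independent given `m`.
On the π-system of sets `A ∩ A'` (`A ∈ m`, `A' ∈ H`) and `B ∈ G`, both sides of the product
formula equal `μ(A') · 1_A · μ[1_B | m]`: the factor `1_A` pulls out, and `1_{A'}` is independent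
of `G ⊇ m ∨ σ(B)`, so it contributes only its mean. -/

theorem IsPiSystem.image2_inter {α : Type*} {C D : Set (Set α)} (hC : IsPiSystem C)
    (hD : IsPiSystem D) : IsPiSystem (Set.image2 (· ∩ ·) C D) := by
  rintro _ ⟨s₁, hs₁, t₁, ht₁, rfl⟩ _ ⟨s₂, hs₂, t₂, ht₂, rfl⟩ hst
  rw [Set.inter_inter_inter_comm] at hst ⊢
  exact Set.mem_image2_of_mem (hC _ hs₁ _ hs₂ hst.left) (hD _ ht₁ _ ht₂ hst.right)

theorem MeasurableSpace.sup_eq_generateFrom_image2_inter {α : Type*} (m₁ m₂ : MeasurableSpace α) :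
    m₁ ⊔ m₂ = generateFrom (Set.image2 (· ∩ ·) {s | MeasurableSet[m₁] s}
      {s | MeasurableSet[m₂] s}) := by
  refine le_antisymm (sup_le (fun s hs => ?_) (fun s hs => ?_)) (generateFrom_le ?_)
  · exact measurableSet_generateFrom ⟨s, hs, Set.univ, .univ, Set.inter_univ s⟩
  · exact measurableSet_generateFrom ⟨Set.univ, .univ, s, hs, Set.univ_inter s⟩
  · rintro _ ⟨s, hs, t, ht, rfl⟩
    exact (le_sup_left (a := m₁) s hs).inter (le_sup_right (a := m₁) t ht)

section
variable {m G H : MeasurableSpace Ω} [mΩ : MeasurableSpace Ω] {μ : Measure Ω}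
  [IsProbabilityMeasure μ]

theorem condExp_indicator_of_indep (hm : m ≤ mΩ) (hH : H ≤ mΩ) (hind : Indep H m μ) {A : Set Ω}
    (hA : MeasurableSet[H] A) : μ⟦A | m⟧ =ᵐ[μ] fun _ => μ.real A := by
  rw [← integral_indicator_one (hH _ hA)]
  exact condExp_indep_eq hH hm (stronglyMeasurable_const.indicator hA) hind

theorem condExp_indicator_inter_of_indep (hm : m ≤ G) (hG : G ≤ mΩ) (hH : H ≤ mΩ)
    (hind : Indep H G μ) {A B : Set Ω} (hA : MeasurableSet[H] A) (hB : MeasurableSet[G] B) :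
    μ⟦A ∩ B | m⟧ =ᵐ[μ] μ.real A • μ⟦B | m⟧ := by
  have hAB_G : μ⟦A ∩ B | G⟧ =ᵐ[μ] μ.real A • B.indicator fun _ => 1 := by
    rw [Set.inter_comm, ← Set.indicator_indicator]
    filter_upwards [condExp_indicator ((integrable_const (1 : ℝ)).indicator (hH _ hA)) hB,
      condExp_indicator_of_indep hG hH hind hA] with ω hB_ω hA_ω
    rw [hB_ω]
    by_cases hω : ω ∈ B <;> simp [hA_ω, hω]
  calc μ⟦A ∩ B | m⟧ =ᵐ[μ] μ[μ⟦A ∩ B | G⟧ | m] := (condExp_condExp_of_le hm hG).symm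
    _ =ᵐ[μ] μ[μ.real A • B.indicator fun _ => 1 | m] := condExp_congr_ae hAB_G
    _ =ᵐ[μ] μ.real A • μ⟦B | m⟧ := condExp_smul _ _ _

variable [StandardBorelSpace Ω]

theorem condIndep_sup_of_indep (hm : m ≤ G) (hG : G ≤ mΩ) (hH : H ≤ mΩ) (hind : Indep H G μ) :
    CondIndep m (m ⊔ H) G (hm.trans hG) μ := by
  have hm' := hm.trans hG
  have hmH : ∀ s ∈ Set.image2 (· ∩ ·) {s | MeasurableSet[m] s} {s | MeasurableSet[H] s},
      MeasurableSet s := by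
    rintro _ ⟨s, hs, t, ht, rfl⟩
    exact (hm' _ hs).inter (hH _ ht)
  refine CondIndepSets.condIndep (sup_le hm' hH) hG
    ((@MeasurableSpace.isPiSystem_measurableSet _ m).image2_inter
      (@MeasurableSpace.isPiSystem_measurableSet _ H))
    (@MeasurableSpace.isPiSystem_measurableSet _ G)
    (MeasurableSpace.sup_eq_generateFrom_image2_inter m H)
    (@MeasurableSpace.generateFrom_measurableSet _ G).symm ?_
  rw [condIndepSets_iff (hs1 := hmH) (s2 := {s | MeasurableSet[G] s})
    (hs2 := fun s hs => hG _ hs)]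
  rintro _ B ⟨A₁, hA₁, A₂, hA₂, rfl⟩ hB
  have h_pull : ∀ S, MeasurableSet S → μ⟦A₁ ∩ S | m⟧ =ᵐ[μ] A₁.indicator (μ⟦S | m⟧) := by
    intro S hS
    rw [← Set.indicator_indicator]
    exact condExp_indicator ((integrable_const (1 : ℝ)).indicator hS) hA₁
  rw [Set.inter_assoc]
  filter_upwards [h_pull _ ((hH _ hA₂).inter (hG _ hB)), h_pull _ (hH _ hA₂),
    condExp_indicator_inter_of_indep hm hG hH hind hA₂ hB,
    condExp_indicator_of_indep hm' hH (indep_of_indep_of_le_right hind hm) hA₂]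
    with ω hA₁A₂B hA₁A₂ hA₂B hA₂
  by_cases hω : ω ∈ A₁ <;> simp [hA₁A₂B, hA₁A₂, hA₂B, hA₂, hω]

theorem condIndepFun_comp_of_indepFun {α β γ δ κ : Type*} [MeasurableSpace α] [MeasurableSpace β]
    [MeasurableSpace γ] [MeasurableSpace δ] [MeasurableSpace κ] {X : Ω → α} {Z : Ω → β}
    (hX : Measurable X) (hZ : Measurable Z) (hXZ : IndepFun X Z μ) {φ : α → γ} (hφ : Measurable φ)
    {ψ : γ × β → δ} (hψ : Measurable ψ) {g : α → κ} (hg : Measurable g) :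
    CondIndepFun (MeasurableSpace.comap (φ ∘ X) inferInstance) (hφ.comp hX).comap_le
      (fun ω => ψ (φ (X ω), Z ω)) (fun ω => g (X ω)) μ := by
  have hφX : MeasurableSpace.comap (φ ∘ X) inferInstance ≤ MeasurableSpace.comap X inferInstance :=
    MeasurableSpace.comap_comp ▸ MeasurableSpace.comap_mono hφ.comap_le
  have hψ_meas : Measurable[MeasurableSpace.comap (φ ∘ X) inferInstance ⊔
      MeasurableSpace.comap Z inferInstance] fun ω => ψ (φ (X ω), Z ω) :=
    hψ.comp (((comap_measurable _).mono le_sup_left le_rfl).prodMk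
      ((comap_measurable Z).mono le_sup_right le_rfl))
  rw [condIndepFun_iff_condIndep]
  exact condIndep_of_condIndep_of_le_right
    (condIndep_of_condIndep_of_le_left
      (condIndep_sup_of_indep hφX hX.comap_le hZ.comap_le hXZ.symm) hψ_meas.comap_le)
    (hg.comp (comap_measurable X)).comap_le

end

theorem counterfactual_condIndep_of_DC_given_T_general
    {Ω : Type*} [MeasurableSpace Ω] [StandardBorelSpace Ω]
    {μ : Measure Ω} [IsProbabilityMeasure μ]
    (w₁ w₂ w₃ w₄ : ℝ) (σ2 : Fin 4 → ℝ≥0)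
    (ε : Fin 4 → Ω → ℝ) (hε : IndepGaussianNoise μ σ2 ε) :
    CondIndepFun (MeasurableSpace.comap (semT w₁ ε) inferInstance)
      (Measurable.comap_le (((hε.1 0).const_mul w₁).add (hε.1 1)))
      (fun ω => semY w₁ w₂ w₃ w₄ ε ω - w₄ * semC w₂ ε ω)
      (fun ω => (semD ε ω, semC w₂ ε ω)) μ := by
  obtain ⟨hε_meas, hε_indep, -⟩ := hε
  let S : Finset (Fin 4) := {0, 1, 2}
  have hX : Measurable fun ω (i : S) => ε i ω := measurable_pi_lambda _ fun i => hε_meas i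
  have hXZ : IndepFun (fun ω (i : S) => ε i ω) (ε 3) μ :=
    (hε_indep.indepFun_finset S {3} (by decide) hε_meas).comp measurable_id
      (measurable_pi_apply (⟨3, Finset.mem_singleton_self 3⟩ : ({3} : Finset (Fin 4))))
  have hY_cf : (fun ω => semY w₁ w₂ w₃ w₄ ε ω - w₄ * semC w₂ ε ω)
      = fun ω => w₃ * semT w₁ ε ω + ε 3 ω := by
    funext ω
    simp only [semY]
    ring
  rw [hY_cf]
  exact condIndepFun_comp_of_indepFun hX (hε_meas 3) hXZ
    (φ := fun x => w₁ * x ⟨0, by decide⟩ + x ⟨1, by decide⟩) (by fun_prop)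
    (ψ := fun p => w₃ * p.1 + p.2) (by fun_prop)
    (g := fun x => (x ⟨0, by decide⟩, w₂ * x ⟨0, by decide⟩ + x ⟨2, by decide⟩)) (by fun_prop)

/-- In the linear Gaussian SEM `D = ε_D`, `T = w₁D + ε_T`,
`C = w₂D + ε_C`, `Y = w₃T + w₄C + ε_Y` with independent centered Gaussian
noises, the counterfactual variable `Y(C=∅) = Y − w₄C` is conditionally
independent of the pair `(D, C)` given `T` (in the standard measure-theoretic
sense). -/
theorem counterfactual_condIndep_of_DC_given_T
    {Ω : Type*} [MeasurableSpace Ω] [StandardBorelSpace Ω] [Nonempty Ω]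
    {μ : Measure Ω} [IsProbabilityMeasure μ]
    (w₁ w₂ w₃ w₄ : ℝ) (σ2 : Fin 4 → ℝ≥0) (hσ2 : ∀ i, 0 < σ2 i)
    (ε : Fin 4 → Ω → ℝ) (hε : IndepGaussianNoise μ σ2 ε) :
    CondIndepFun (MeasurableSpace.comap (semT w₁ ε) inferInstance)
      (Measurable.comap_le (((hε.1 0).const_mul w₁).add (hε.1 1)))
      (fun ω => semY w₁ w₂ w₃ w₄ ε ω - w₄ * semC w₂ ε ω)
      (fun ω => (semD ε ω, semC w₂ ε ω)) μ :=
  counterfactual_condIndep_of_DC_given_T_general w₁ w₂ w₃ w₄ σ2 ε hε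
end

section
/- Let Y′ and g be real-valued square-integrable random variables and let the class label be a binary random variable B. Suppose that within each class (conditionally on B = 0 and on B = 1) g is independent of Y′, and that the conditional mean and variance of g are the same in both classes (E[g | B=0] = E[g | B=1] and Var(g | B=0) = Var(g | B=1) > 0 or ≥ 0). Define Y = Y′ + g. Then Fisher's discriminant ratio of Y′, namely (E[Y′|B=1] − E[Y′|B=0])² / (Var(Y′|B=1) + Var(Y′|B=0)), is greater than or equal to Fisher's discriminant ratio of Y, with strict inequality whenever Var(g | B=b) > 0 for some b and the class means of Y′ differ. That is, removing an independent additive component with class-invariant distribution from a feature can only increase its Fisher's discriminant ratio. -/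
open MeasureTheory ProbabilityTheory

/-- Fisher's discriminant ratio of a real-valued feature `X` for a binary class
label `B`: `(μ₁ − μ₀)² / (σ₁² + σ₀²)`, where `μ_b` and `σ_b²` are the mean and
variance of `X` under the conditional measure given `B = b`. -/
noncomputable def fisherRatio {Ω : Type*} [MeasurableSpace Ω] (μ : Measure Ω)
    (B : Ω → Bool) (X : Ω → ℝ) : ℝ :=
  (∫ ω, X ω ∂(μ[|B ⁻¹' {true}]) - ∫ ω, X ω ∂(μ[|B ⁻¹' {false}])) ^ 2 /
    (variance X (μ[|B ⁻¹' {true}]) + variance X (μ[|B ⁻¹' {false}]))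

/-! Within each class, independence makes the variances of `Y'` and `g` add, while the
class-invariant mean of `g` cancels from the difference of class means. So adding `g` keeps
the numerator of the Fisher ratio and enlarges its denominator by `2 Var g`. -/

section AdditiveComponent

variable {Ω : Type*} [MeasurableSpace Ω] {μ : Measure Ω} {B : Ω → Bool} {X Y : Ω → ℝ}

theorem fisherRatio_add_of_indepFun (hX : ∀ b, MemLp X 2 (μ[|B ⁻¹' {b}]))
    (hY : ∀ b, MemLp Y 2 (μ[|B ⁻¹' {b}])) (hXY : ∀ b, IndepFun X Y (μ[|B ⁻¹' {b}])) :
    fisherRatio μ B (fun ω => X ω + Y ω) =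
      ((∫ ω, X ω ∂(μ[|B ⁻¹' {true}]) + ∫ ω, Y ω ∂(μ[|B ⁻¹' {true}])) -
          (∫ ω, X ω ∂(μ[|B ⁻¹' {false}]) + ∫ ω, Y ω ∂(μ[|B ⁻¹' {false}]))) ^ 2 /
        ((variance X (μ[|B ⁻¹' {true}]) + variance Y (μ[|B ⁻¹' {true}])) +
          (variance X (μ[|B ⁻¹' {false}]) + variance Y (μ[|B ⁻¹' {false}]))) := by
  have hmean b : ∫ ω, X ω + Y ω ∂(μ[|B ⁻¹' {b}]) =
      ∫ ω, X ω ∂(μ[|B ⁻¹' {b}]) + ∫ ω, Y ω ∂(μ[|B ⁻¹' {b}]) :=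
    integral_add ((hX b).integrable one_le_two) ((hY b).integrable one_le_two)
  have hvar b : variance (fun ω => X ω + Y ω) (μ[|B ⁻¹' {b}]) =
      variance X (μ[|B ⁻¹' {b}]) + variance Y (μ[|B ⁻¹' {b}]) :=
    (hXY b).variance_add (hX b) (hY b)
  rw [fisherRatio, hmean, hmean, hvar, hvar]

theorem fisherRatio_add_of_indepFun_of_classInvariant (hX : ∀ b, MemLp X 2 (μ[|B ⁻¹' {b}]))
    (hY : ∀ b, MemLp Y 2 (μ[|B ⁻¹' {b}])) (hXY : ∀ b, IndepFun X Y (μ[|B ⁻¹' {b}]))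
    (hmean : ∫ ω, Y ω ∂(μ[|B ⁻¹' {false}]) = ∫ ω, Y ω ∂(μ[|B ⁻¹' {true}]))
    (hvar : variance Y (μ[|B ⁻¹' {false}]) = variance Y (μ[|B ⁻¹' {true}])) :
    fisherRatio μ B (fun ω => X ω + Y ω) =
      (∫ ω, X ω ∂(μ[|B ⁻¹' {true}]) - ∫ ω, X ω ∂(μ[|B ⁻¹' {false}])) ^ 2 /
        (variance X (μ[|B ⁻¹' {true}]) + variance X (μ[|B ⁻¹' {false}]) +
          2 * variance Y (μ[|B ⁻¹' {true}])) := by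
  rw [fisherRatio_add_of_indepFun hX hY hXY, hmean, hvar]
  ring_nf

end AdditiveComponent

theorem fisherRatio_le_of_remove_additive_component_general
    {Ω : Type*} [MeasurableSpace Ω] (μ : Measure Ω)
    (Y' g : Ω → ℝ) (B : Ω → Bool)
    (hY'L2 : ∀ b : Bool, MemLp Y' 2 (μ[|B ⁻¹' {b}]))
    (hgL2 : ∀ b : Bool, MemLp g 2 (μ[|B ⁻¹' {b}]))
    (hindep : ∀ b : Bool, IndepFun Y' g (μ[|B ⁻¹' {b}]))
    (hmean : ∫ ω, g ω ∂(μ[|B ⁻¹' {false}]) = ∫ ω, g ω ∂(μ[|B ⁻¹' {true}]))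
    (hvar : variance g (μ[|B ⁻¹' {false}]) = variance g (μ[|B ⁻¹' {true}]))
    (hvarY' : 0 < variance Y' (μ[|B ⁻¹' {true}]) + variance Y' (μ[|B ⁻¹' {false}])) :
    fisherRatio μ B (fun ω => Y' ω + g ω) ≤ fisherRatio μ B Y' ∧
    (((0 < variance g (μ[|B ⁻¹' {false}]) ∨ 0 < variance g (μ[|B ⁻¹' {true}])) ∧
        ∫ ω, Y' ω ∂(μ[|B ⁻¹' {true}]) ≠ ∫ ω, Y' ω ∂(μ[|B ⁻¹' {false}])) →
      fisherRatio μ B (fun ω => Y' ω + g ω) < fisherRatio μ B Y') := by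
  rw [fisherRatio_add_of_indepFun_of_classInvariant hY'L2 hgL2 hindep hmean hvar, fisherRatio,
    ← hvar]
  refine ⟨div_le_div_of_nonneg_left (sq_nonneg _) hvarY' ?_, ?_⟩
  · linarith [variance_nonneg g (μ[|B ⁻¹' {false}])]
  · rintro ⟨hg_pos, hY'_ne⟩
    exact div_lt_div_of_pos_left (sq_pos_of_ne_zero (sub_ne_zero.mpr hY'_ne)) hvarY'
      (by rcases hg_pos with h | h <;> linarith)

/-- Let `Y′` and `g` be real-valued square-integrable random
variables and let the class label be a binary random variable `B`.  Suppose
that within each class (conditionally on `B = 0` and on `B = 1`) `g` is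
independent of `Y′`, and that the conditional mean and variance of `g` are the
same in both classes.  Define `Y = Y′ + g`.  Then Fisher's discriminant ratio
of `Y′` is greater than or equal to Fisher's discriminant ratio of `Y`, with
strict inequality whenever `Var(g | B = b) > 0` for some `b` and the class
means of `Y′` differ: removing an independent additive component with
class-invariant distribution from a feature can only increase its Fisher's
discriminant ratio. -/
theorem fisherRatio_le_of_remove_additive_component
    {Ω : Type*} [MeasurableSpace Ω] (μ : Measure Ω) [IsProbabilityMeasure μ]
    (Y' g : Ω → ℝ) (B : Ω → Bool)
    (hY'm : Measurable Y') (hgm : Measurable g) (hBm : Measurable B)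
    (hpos : ∀ b : Bool, μ (B ⁻¹' {b}) ≠ 0)
    (hY'L2 : ∀ b : Bool, MemLp Y' 2 (μ[|B ⁻¹' {b}]))
    (hgL2 : ∀ b : Bool, MemLp g 2 (μ[|B ⁻¹' {b}]))
    (hindep : ∀ b : Bool, IndepFun Y' g (μ[|B ⁻¹' {b}]))
    (hmean : ∫ ω, g ω ∂(μ[|B ⁻¹' {false}]) = ∫ ω, g ω ∂(μ[|B ⁻¹' {true}]))
    (hvar : variance g (μ[|B ⁻¹' {false}]) = variance g (μ[|B ⁻¹' {true}]))
    (hvarY' : 0 < variance Y' (μ[|B ⁻¹' {true}]) + variance Y' (μ[|B ⁻¹' {false}])) :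
    fisherRatio μ B (fun ω => Y' ω + g ω) ≤ fisherRatio μ B Y' ∧
    (((0 < variance g (μ[|B ⁻¹' {false}]) ∨ 0 < variance g (μ[|B ⁻¹' {true}])) ∧
        ∫ ω, Y' ω ∂(μ[|B ⁻¹' {true}]) ≠ ∫ ω, Y' ω ∂(μ[|B ⁻¹' {false}])) →
      fisherRatio μ B (fun ω => Y' ω + g ω) < fisherRatio μ B Y') :=
  fisherRatio_le_of_remove_additive_component_general μ Y' g B hY'L2 hgL2 hindep hmean hvar hvarY'
end
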